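/- Let f, g ∈ G satisfy f∘g = g∘f = e. Then f = (f⊣g)⊣f. (That is, the operadic R-transform k := f⊣f^{∘−1} of f satisfies the fixed-point equation f = k⊣f.) -/

import Mathlib

inductive PTree : Type where
  | node : List PTree → PTree

mutual
  def leavesT : PTree → ℕ
    | .node [] => 1
    | .node (t :: ts) => leavesT t + leavesL ts
  def leavesL : List PTree → ℕ
    | [] => 0
    | t :: ts => leavesT t + leavesL ts
end

inductive Reduced : PTree → Prop where
  | leaf : Reduced (.node [])
  | node : ∀ ts : List PTree, 2 ≤ ts.length → (∀ t ∈ ts, Reduced t) → Reduced (.node ts)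

mutual
  /-- Replace the leaves of a tree, from left to right, by the trees of a list;
  returns the resulting tree together with the unused trees of the list. -/
  def graftT : PTree → List PTree → PTree × List PTree
    | .node [], l => (l.headD (.node []), l.tail)
    | .node (c :: cs), l =>
        let p := graftL (c :: cs) l
        (.node p.1, p.2)
  def graftL : List PTree → List PTree → List PTree × List PTree
    | [], l => ([], l)
    | c :: cs, l =>
        let p := graftT c l
        let q := graftL cs p.2
        (p.1 :: q.1, q.2)
end

/-- Schröder trees. -/
def SchT : Type := {t : PTree // Reduced t}

def leafST : SchT := ⟨.node [], Reduced.leaf⟩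

/-- Decompositions `t = t₀ ∘ (t₁, …, t_n)` of a Schröder tree, where `t₀` has `n`
leaves. -/
def Decomps (t : SchT) : Set (SchT × List SchT) :=
  {p | (p.2.map Subtype.val).length = leavesT p.1.val ∧
    (graftT p.1.val (p.2.map Subtype.val)).1 = t.val}

/-- The composition product of the group of the Schröder operad:
`(f∘g)(t) = Σ f(t₀)·g(t₁)⋯g(t_n)` over all decompositions `t = t₀∘(t₁,…,t_n)`. -/
noncomputable def compG (f g : SchT → ℚ) : SchT → ℚ :=
  fun t => ∑ᶠ p ∈ Decomps t, f p.1 * (p.2.map g).prod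

/-- `(f⊣g)(t) = Σ f(t₀)·g(t₁)⋯g(t_{n−1})` over decompositions whose last entry is
the leaf. -/
noncomputable def ldash (f g : SchT → ℚ) : SchT → ℚ :=
  fun t => ∑ᶠ p ∈ {p | p ∈ Decomps t ∧ p.2.getLast? = some leafST},
    f p.1 * (p.2.dropLast.map g).prod

/-- `(f⊢g)(t) = Σ f(t₀)·g(t_n)` over decompositions whose entries `t₁,…,t_{n−1}`
are all leaves. -/
noncomputable def rdash (f g : SchT → ℚ) : SchT → ℚ :=
  fun t => ∑ᶠ p ∈ {p | p ∈ Decomps t ∧ ∀ s ∈ p.2.dropLast, s = leafST},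
    f p.1 * g (p.2.getLastD leafST)

/-- The identity element: the indicator function of the leaf. -/
def eG : SchT → ℚ := fun t =>
  match t.val with
  | .node [] => 1
  | _ => 0

/-! The heart of the matter is the identity `(f ⊣ g) ⊣ h = f ⊣ (g ∘ h)`, an instance of the
associativity of grafting: a pair of decompositions `t = t₁ ∘ (ps, leaf)`, `t₁ = t₀ ∘ (qs, leaf)`
is the same datum as a decomposition `t = t₀ ∘ (rs, leaf)` together with a blockwise splitting
`rs = qs ∘ ps`, and summing over these splittings of `rs` yields `∏ᵢ (g ∘ h)(rsᵢ)`. Taking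
`h = f`, the relation `g ∘ f = e` and the unit law `f ⊣ e = f` give `(f ⊣ g) ⊣ f = f`. -/

-- lets rewriting with `Subtype` lemmas see through `SchT`
attribute [reducible] SchT

theorem List.exists_append_of_length_eq_add {α : Type*} {l : List α} {m n : ℕ}
    (h : l.length = m + n) : ∃ l₁ l₂, l = l₁ ++ l₂ ∧ l₁.length = m ∧ l₂.length = n :=
  ⟨l.take m, l.drop m, (l.take_append_drop m).symm, by simp; omega, by simp; omega⟩

theorem leavesT_pos : ∀ t, 1 ≤ leavesT t
  | .node [] => le_rfl
  | .node (c :: _) => (leavesT_pos c).trans (Nat.le_add_right _ _)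

theorem leavesL_append (a b : List PTree) : leavesL (a ++ b) = leavesL a + leavesL b := by
  induction a with
  | nil => exact (zero_add _).symm
  | cons c cs ih =>
      change leavesT c + leavesL (cs ++ b) = leavesT c + leavesL cs + leavesL b
      rw [ih, add_assoc]

theorem length_graftL_fst (cs l : List PTree) : (graftL cs l).1.length = cs.length := by
  induction cs generalizing l with
  | nil => rfl
  | cons c cs ih => exact congrArg Nat.succ (ih _)

theorem graftT_node {cs : List PTree} (hcs : cs ≠ []) (l : List PTree) :
    graftT (.node cs) l = (.node (graftL cs l).1, (graftL cs l).2) := by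
  cases cs with
  | nil => exact absurd rfl hcs
  | cons => rfl

theorem graftL_append (a b m : List PTree) :
    graftL (a ++ b) m =
      ((graftL a m).1 ++ (graftL b (graftL a m).2).1, (graftL b (graftL a m).2).2) := by
  induction a generalizing m with
  | nil => rfl
  | cons c cs ih => simp only [List.cons_append, graftL, ih]

mutual
theorem graftT_append_of_length_eq : ∀ (t : PTree) (l m : List PTree), l.length = leavesT t →
    graftT t (l ++ m) = ((graftT t l).1, m)
  | .node [], [_], _, _ => rfl
  | .node (c :: cs), l, m, h => by
      simp only [graftT, graftL_append_of_length_eq (c :: cs) l m h]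
theorem graftL_append_of_length_eq : ∀ (cs l m : List PTree), l.length = leavesL cs →
    graftL cs (l ++ m) = ((graftL cs l).1, m)
  | [], [], _, _ => rfl
  | c :: cs, l, m, h => by
      obtain ⟨l₁, l₂, rfl, h₁, h₂⟩ := List.exists_append_of_length_eq_add h
      simp only [graftL, List.append_assoc, graftT_append_of_length_eq c l₁ _ h₁,
        graftL_append_of_length_eq cs l₂ m h₂]
end

theorem graftL_cons_append {c : PTree} {l₁ : List PTree} (h : l₁.length = leavesT c)
    (cs l₂ : List PTree) :
    graftL (c :: cs) (l₁ ++ l₂) = ((graftT c l₁).1 :: (graftL cs l₂).1, (graftL cs l₂).2) := by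
  simp only [graftL, graftT_append_of_length_eq c l₁ l₂ h]

mutual
theorem leavesT_graftT : ∀ (t : PTree) (l : List PTree), l.length = leavesT t →
    leavesT (graftT t l).1 = leavesL l
  | .node [], [_], _ => rfl
  | .node (c :: cs), l, h => leavesL_graftL (c :: cs) l h
theorem leavesL_graftL : ∀ (cs l : List PTree), l.length = leavesL cs →
    leavesL (graftL cs l).1 = leavesL l
  | [], [], _ => rfl
  | c :: cs, l, h => by
      obtain ⟨l₁, l₂, rfl, h₁, h₂⟩ := List.exists_append_of_length_eq_add h
      rw [graftL_cons_append h₁, leavesL_append, ← leavesT_graftT c l₁ h₁,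
        ← leavesL_graftL cs l₂ h₂]
      rfl
end

mutual
theorem graftT_replicate_leaf : ∀ t : PTree,
    graftT t (List.replicate (leavesT t) (.node [])) = (t, [])
  | .node [] => rfl
  | .node (c :: cs) => by
      rw [graftT_node (List.cons_ne_nil c cs)]
      exact congrArg (fun p => (PTree.node p.1, p.2)) (graftL_replicate_leaf (c :: cs))
theorem graftL_replicate_leaf : ∀ cs : List PTree,
    graftL cs (List.replicate (leavesL cs) (.node [])) = (cs, [])
  | [] => rfl
  | c :: cs => by
      rw [show leavesL (c :: cs) = leavesT c + leavesL cs from rfl, List.replicate_add,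
        graftL_cons_append (List.length_replicate ..), graftT_replicate_leaf c,
        graftL_replicate_leaf cs]
end

mutual
theorem graftT_graftT : ∀ (t : PTree) (l m : List PTree), l.length = leavesT t →
    graftT (graftT t l).1 m = ((graftT t (graftL l m).1).1, (graftL l m).2)
  | .node [], [_], _, _ => rfl
  | .node (c :: cs), l, m, h => by
      have hne : (graftL (c :: cs) l).1 ≠ [] :=
        List.ne_nil_of_length_pos ((length_graftL_fst _ _).symm ▸ Nat.succ_pos _)
      rw [graftT_node (List.cons_ne_nil c cs), graftT_node hne, graftT_node (List.cons_ne_nil c cs),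
        graftL_graftL (c :: cs) l m h]
theorem graftL_graftL : ∀ (cs l m : List PTree), l.length = leavesL cs →
    graftL (graftL cs l).1 m = ((graftL cs (graftL l m).1).1, (graftL l m).2)
  | [], [], _, _ => rfl
  | c :: cs, l, m, h => by
      obtain ⟨l₁, l₂, rfl, h₁, h₂⟩ := List.exists_append_of_length_eq_add h
      have h₁' : (graftL l₁ m).1.length = leavesT c := (length_graftL_fst _ _).trans h₁
      rw [graftL_cons_append h₁, graftL_append, graftL_cons_append h₁']
      simp only [graftL, graftT_graftT c l₁ m h₁, graftL_graftL cs l₂ _ h₂]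
end

mutual
theorem reduced_graftT : ∀ (t : PTree) (l : List PTree), Reduced t → (∀ s ∈ l, Reduced s) →
    Reduced (graftT t l).1 ∧ ∀ s ∈ (graftT t l).2, Reduced s
  | .node [], l, _, hl => by
      refine ⟨?_, fun s hs => hl s (List.mem_of_mem_tail hs)⟩
      cases l with
      | nil => exact Reduced.leaf
      | cons x _ => exact hl x List.mem_cons_self
  | .node (c :: cs), l, .node _ hlen hcs, hl => by
      obtain ⟨h₁, h₂⟩ := reduced_graftL (c :: cs) l hcs hl
      exact ⟨.node _ ((length_graftL_fst _ _).symm ▸ hlen) h₁, h₂⟩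
theorem reduced_graftL : ∀ (cs l : List PTree), (∀ c ∈ cs, Reduced c) → (∀ s ∈ l, Reduced s) →
    (∀ s ∈ (graftL cs l).1, Reduced s) ∧ ∀ s ∈ (graftL cs l).2, Reduced s
  | [], _, _, hl => ⟨by simp [graftL], hl⟩
  | c :: cs, l, hcs, hl => by
      obtain ⟨h₁, h₂⟩ := reduced_graftT c l (hcs c List.mem_cons_self) hl
      obtain ⟨h₃, h₄⟩ := reduced_graftL cs _ (fun x hx => hcs x (List.mem_cons_of_mem _ hx)) h₂
      exact ⟨List.forall_mem_cons.2 ⟨h₁, h₃⟩, h₄⟩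
end

/-- `t = t₀ ∘ l`. -/
def IsDecomp (t₀ : PTree) (l : List PTree) (t : PTree) : Prop :=
  l.length = leavesT t₀ ∧ (graftT t₀ l).1 = t

/-- `l` splits into consecutive blocks `l₁, …, l_k` with `us = [cs₁ ∘ l₁, …, cs_k ∘ l_k]`. -/
def IsDecompL (cs l us : List PTree) : Prop :=
  l.length = leavesL cs ∧ (graftL cs l).1 = us

theorem isDecompL_nil_left_iff {l us : List PTree} : IsDecompL [] l us ↔ l = [] ∧ us = [] := by
  simp [IsDecompL, graftL, leavesL, eq_comm]

theorem isDecompL_cons_left_iff {c : PTree} {cs l us : List PTree} :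
    IsDecompL (c :: cs) l us ↔
      ∃ l₁ l₂ u us', l = l₁ ++ l₂ ∧ us = u :: us' ∧ IsDecomp c l₁ u ∧ IsDecompL cs l₂ us' := by
  constructor
  · rintro ⟨hlen, rfl⟩
    obtain ⟨l₁, l₂, rfl, h₁, h₂⟩ := List.exists_append_of_length_eq_add hlen
    exact ⟨l₁, l₂, _, _, rfl, graftL_cons_append h₁ cs l₂ ▸ rfl, ⟨h₁, rfl⟩, ⟨h₂, rfl⟩⟩
  · rintro ⟨l₁, l₂, u, us', rfl, rfl, ⟨h₁, rfl⟩, ⟨h₂, rfl⟩⟩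
    refine ⟨?_, by rw [graftL_cons_append h₁]⟩
    rw [List.length_append, h₁, h₂]
    rfl

theorem isDecompL_nil_right_iff {cs l : List PTree} : IsDecompL cs l [] ↔ cs = [] ∧ l = [] := by
  cases cs with
  | nil => simp [isDecompL_nil_left_iff]
  | cons c cs => simp [isDecompL_cons_left_iff]

theorem isDecompL_cons_right_iff {cs l : List PTree} {u : PTree} {us : List PTree} :
    IsDecompL cs l (u :: us) ↔
      ∃ c cs' l₁ l₂, cs = c :: cs' ∧ l = l₁ ++ l₂ ∧ IsDecomp c l₁ u ∧ IsDecompL cs' l₂ us := by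
  cases cs with
  | nil => simp [isDecompL_nil_left_iff]
  | cons c cs => simp [isDecompL_cons_left_iff]

theorem IsDecomp.eq_leaf_or {t₀ : PTree} {l ts : List PTree} (h : IsDecomp t₀ l (.node ts)) :
    (t₀ = .node [] ∧ l = [.node ts]) ∨ ∃ cs, t₀ = .node cs ∧ IsDecompL cs l ts := by
  obtain ⟨hlen, hgraft⟩ := h
  match t₀, l with
  | .node [], [x] => exact .inl ⟨rfl, by rw [← hgraft]; rfl⟩
  | .node (c :: cs), l =>
      rw [graftT_node (List.cons_ne_nil c cs)] at hgraft
      exact .inr ⟨c :: cs, rfl, hlen, PTree.node.inj hgraft⟩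

mutual
theorem finite_isDecomp : ∀ t : PTree, {p : PTree × List PTree | IsDecomp p.1 p.2 t}.Finite
  | .node ts => by
      refine ((Set.finite_singleton (PTree.node [], [PTree.node ts])).union
        ((finite_isDecompL ts).image fun q => (PTree.node q.1, q.2))).subset ?_
      rintro ⟨t₀, l⟩ h
      rcases h.eq_leaf_or with ⟨rfl, rfl⟩ | ⟨cs, rfl, hcs⟩
      · exact .inl rfl
      · exact .inr ⟨(cs, l), hcs, rfl⟩
theorem finite_isDecompL : ∀ us : List PTree,
    {q : List PTree × List PTree | IsDecompL q.1 q.2 us}.Finite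
  | [] => by
      refine (Set.finite_singleton ([], [])).subset ?_
      rintro ⟨cs, l⟩ h
      obtain ⟨rfl, rfl⟩ := isDecompL_nil_right_iff.1 h
      rfl
  | u :: us => by
      refine (((finite_isDecomp u).prod (finite_isDecompL us)).image
        fun x => (x.1.1 :: x.2.1, x.1.2 ++ x.2.2)).subset ?_
      rintro ⟨cs, l⟩ h
      obtain ⟨c, cs', l₁, l₂, rfl, rfl, h₁, h₂⟩ := isDecompL_cons_right_iff.1 h
      exact ⟨((c, l₁), (cs', l₂)), ⟨h₁, h₂⟩, rfl⟩
end

theorem IsDecompL.append {cs l us cs' l' us' : List PTree} (h : IsDecompL cs l us)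
    (h' : IsDecompL cs' l' us') : IsDecompL (cs ++ cs') (l ++ l') (us ++ us') := by
  induction cs generalizing l us with
  | nil =>
      obtain ⟨rfl, rfl⟩ := isDecompL_nil_left_iff.1 h
      exact h'
  | cons c cs ih =>
      obtain ⟨l₁, l₂, u, us₂, rfl, rfl, h₁, h₂⟩ := isDecompL_cons_left_iff.1 h
      exact isDecompL_cons_left_iff.2 ⟨l₁, l₂ ++ l', u, us₂ ++ us', (List.append_assoc ..),
        rfl, h₁, ih h₂⟩

theorem isDecompL_leaf (x : PTree) : IsDecompL [.node []] [x] [x] := ⟨rfl, rfl⟩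

theorem isDecomp_replicate_leaf_iff {t₀ t : PTree} {n : ℕ} :
    IsDecomp t₀ (List.replicate n (.node [])) t ↔ t₀ = t ∧ n = leavesT t := by
  constructor
  · rintro ⟨hlen, rfl⟩
    rw [List.length_replicate] at hlen
    subst hlen
    rw [graftT_replicate_leaf]
    exact ⟨rfl, rfl⟩
  · rintro ⟨rfl, rfl⟩
    exact ⟨List.length_replicate .., by rw [graftT_replicate_leaf]⟩

theorem IsDecomp.trans {t₀ t₁ t : PTree} {qs ps : List PTree} (hq : IsDecomp t₀ qs t₁)
    (hp : IsDecomp t₁ ps t) :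
    IsDecomp t₀ (graftL qs ps).1 t ∧ IsDecompL qs ps (graftL qs ps).1 := by
  obtain ⟨hq₁, rfl⟩ := hq
  obtain ⟨hp₁, rfl⟩ := hp
  refine ⟨⟨(length_graftL_fst _ _).trans hq₁, ?_⟩, ⟨hp₁.trans (leavesT_graftT _ _ hq₁), rfl⟩⟩
  rw [graftT_graftT _ _ _ hq₁]

theorem IsDecomp.split {t₀ t : PTree} {rs cs l : List PTree} (h : IsDecomp t₀ rs t)
    (hc : IsDecompL cs l rs) :
    IsDecomp t₀ cs (graftT t₀ cs).1 ∧ IsDecomp (graftT t₀ cs).1 l t := by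
  obtain ⟨hlen, rfl⟩ := h
  obtain ⟨hc₁, rfl⟩ := hc
  have hcs : cs.length = leavesT t₀ := (length_graftL_fst _ _).symm.trans hlen
  exact ⟨⟨hcs, rfl⟩, hc₁.trans (leavesT_graftT _ _ hcs).symm, by rw [graftT_graftT _ _ _ hcs]⟩

theorem IsDecomp.trans_concat_leaf {t₀ t₁ t : PTree} {qs ps : List PTree}
    (hq : IsDecomp t₀ (qs ++ [.node []]) t₁) (hp : IsDecomp t₁ (ps ++ [.node []]) t) :
    IsDecomp t₀ ((graftL qs ps).1 ++ [.node []]) t ∧ IsDecompL qs ps (graftL qs ps).1 := by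
  obtain ⟨h, hL⟩ := hq.trans hp
  have hlen : ps.length = leavesL qs := by
    have := hL.1
    rw [List.length_append, leavesL_append] at this
    exact Nat.add_right_cancel this
  have hqs : IsDecompL qs ps (graftL qs ps).1 := ⟨hlen, rfl⟩
  rw [(hqs.append (isDecompL_leaf _)).2] at h
  exact ⟨h, hqs⟩

open Classical in
/-- Non-reduced trees are sent to the leaf, a junk value. -/
noncomputable def toSchT (x : PTree) : SchT := if h : Reduced x then ⟨x, h⟩ else leafST

theorem toSchT_val {x : PTree} (h : Reduced x) : (toSchT x).val = x := by
  rw [toSchT, dif_pos h]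

theorem toSchT_val_self (s : SchT) : toSchT s.val = s := Subtype.ext (toSchT_val s.2)

theorem map_val_map_toSchT {l : List PTree} (h : ∀ x ∈ l, Reduced x) :
    (l.map toSchT).map Subtype.val = l := by
  rw [List.map_map]
  exact (List.map_congr_left fun x hx => toSchT_val (h x hx)).trans l.map_id

theorem map_toSchT_map_val (L : List SchT) : (L.map Subtype.val).map toSchT = L := by
  rw [List.map_map]
  exact (List.map_congr_left fun x _ => toSchT_val_self x).trans L.map_id

theorem reduced_of_mem_map_val {L : List SchT} {x : PTree} (hx : x ∈ L.map Subtype.val) :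
    Reduced x := by
  obtain ⟨s, -, rfl⟩ := List.mem_map.1 hx
  exact s.2

theorem map_val_injective : Function.Injective (List.map (Subtype.val : SchT → PTree)) :=
  Subtype.val_injective.list_map

theorem map_val_concat_leaf (L : List SchT) :
    (L ++ [leafST]).map Subtype.val = L.map Subtype.val ++ [.node []] :=
  List.map_append ..

/-- The decompositions `t = t₀ ∘ (t₁, …, t_{n-1}, leaf)` indexing `ldash`, recorded as
`(t₀, [t₁, …, t_{n-1}])`. -/
def LeafDecomps (t : SchT) : Set (SchT × List SchT) :=
  {p | IsDecomp p.1.val (p.2.map Subtype.val ++ [.node []]) t.val}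

def ListDecomps (us : List SchT) : Set (List SchT × List SchT) :=
  {c | IsDecompL (c.1.map Subtype.val) (c.2.map Subtype.val) (us.map Subtype.val)}

theorem decomps_finite (t : SchT) : (Decomps t).Finite :=
  (finite_isDecomp t.val).preimage
    (Subtype.val_injective.prodMap map_val_injective).injOn

theorem leafDecomps_finite (t : SchT) : (LeafDecomps t).Finite :=
  (finite_isDecomp t.val).preimage
    (f := fun p : SchT × List SchT => (p.1.val, p.2.map Subtype.val ++ [PTree.node []]))
    fun _ _ _ _ h => Prod.ext (Subtype.val_injective (Prod.ext_iff.1 h).1)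
      (map_val_injective (List.append_cancel_right (Prod.ext_iff.1 h).2))

theorem listDecomps_finite (us : List SchT) : (ListDecomps us).Finite :=
  (finite_isDecompL (us.map Subtype.val)).preimage
    (map_val_injective.prodMap map_val_injective).injOn

theorem compG_eq_sum (g h : SchT → ℚ) (u : SchT) :
    compG g h u = ∑ p ∈ (decomps_finite u).toFinset, g p.1 * (p.2.map h).prod :=
  finsum_mem_eq_finite_toFinset_sum _ _

theorem ldash_eq_sum (f g : SchT → ℚ) (t : SchT) :
    ldash f g t = ∑ p ∈ (leafDecomps_finite t).toFinset, f p.1 * (p.2.map g).prod := by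
  rw [← finsum_mem_eq_finite_toFinset_sum]
  refine (finsum_mem_eq_of_bijOn (fun p => (p.1, p.2 ++ [leafST])) ⟨?_, ?_, ?_⟩ ?_).symm
  · intro p hp
    refine ⟨?_, List.getLast?_concat ..⟩
    change IsDecomp _ _ _
    rwa [map_val_concat_leaf]
  · intro p _ q _ hpq
    simp only [Prod.mk.injEq, List.append_left_inj] at hpq
    exact Prod.ext hpq.1 hpq.2
  · rintro ⟨t₀, l⟩ ⟨hl, hlast⟩
    have hl' : l = l.dropLast ++ [leafST] := (List.dropLast_append_getLast? _ hlast).symm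
    refine ⟨(t₀, l.dropLast), ?_, by simp only [← hl']⟩
    change IsDecomp _ _ _ at hl
    rwa [hl', map_val_concat_leaf] at hl
  · intro p _
    simp only [List.dropLast_concat]

theorem mem_listDecomps_cons_iff {u : SchT} {us cs l : List SchT} :
    (cs, l) ∈ ListDecomps (u :: us) ↔ ∃ s cs' b l', cs = s :: cs' ∧ l = b ++ l' ∧
      (s, b) ∈ Decomps u ∧ (cs', l') ∈ ListDecomps us := by
  change IsDecompL _ _ (_ :: _) ↔ _
  rw [isDecompL_cons_right_iff]
  constructor
  · rintro ⟨c, cs', l₁, l₂, hcs, hl, h₁, h₂⟩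
    obtain ⟨s, cs, rfl, rfl, rfl⟩ := List.map_eq_cons_iff.1 hcs
    obtain ⟨b, l, rfl, rfl, rfl⟩ := List.map_eq_append_iff.1 hl
    exact ⟨s, cs, b, l, rfl, rfl, h₁, h₂⟩
  · rintro ⟨s, cs', b, l', rfl, rfl, h₁, h₂⟩
    exact ⟨_, _, _, _, rfl, List.map_append .., h₁, h₂⟩

theorem prod_map_compG (g h : SchT → ℚ) (us : List SchT) :
    (us.map (compG g h)).prod =
      ∑ c ∈ (listDecomps_finite us).toFinset, (c.1.map g).prod * (c.2.map h).prod := by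
  induction us with
  | nil =>
      have : (listDecomps_finite []).toFinset = {([], [])} := by
        ext ⟨cs, l⟩
        simp only [Set.Finite.mem_toFinset, ListDecomps, Set.mem_ofPred_eq, List.map_nil,
          isDecompL_nil_right_iff, List.map_eq_nil_iff, Finset.mem_singleton, Prod.mk.injEq]
      simp [this]
  | cons u us ih =>
      rw [List.map_cons, List.prod_cons, compG_eq_sum, ih, Finset.sum_mul_sum,
        ← Finset.sum_product']
      refine Finset.sum_bij (fun x _ => (x.1.1 :: x.2.1, x.1.2 ++ x.2.2)) ?_ ?_ ?_ ?_
      · rintro ⟨⟨s, b⟩, ⟨cs, l⟩⟩ hx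
        simp only [Finset.mem_product, Set.Finite.mem_toFinset] at hx ⊢
        exact mem_listDecomps_cons_iff.2 ⟨s, cs, b, l, rfl, rfl, hx.1, hx.2⟩
      · rintro ⟨⟨s, b⟩, ⟨cs, l⟩⟩ hx ⟨⟨s', b'⟩, ⟨cs', l'⟩⟩ hx' hxx'
        simp only [Finset.mem_product, Set.Finite.mem_toFinset] at hx hx'
        simp only [Prod.mk.injEq, List.cons.injEq] at hxx' ⊢
        obtain ⟨⟨rfl, rfl⟩, hbl⟩ := hxx'
        have hlen : b.length = b'.length := by
          simpa using hx.1.1.trans hx'.1.1.symm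
        exact ⟨⟨rfl, (List.append_inj hbl hlen).1⟩, rfl, (List.append_inj hbl hlen).2⟩
      · rintro ⟨cs, l⟩ hc
        obtain ⟨s, cs', b, l', rfl, rfl, h₁, h₂⟩ :=
          mem_listDecomps_cons_iff.1 ((Set.Finite.mem_toFinset _).1 hc)
        exact ⟨((s, b), (cs', l')), by simpa using ⟨h₁, h₂⟩, rfl⟩
      · rintro ⟨⟨s, b⟩, ⟨cs, l⟩⟩ _
        simp only [List.map_cons, List.prod_cons, List.map_append, List.prod_append]
        ring

theorem eG_leafST : eG leafST = 1 := rfl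

theorem eG_of_ne_leafST {s : SchT} (h : s ≠ leafST) : eG s = 0 := by
  obtain ⟨⟨_ | ⟨_, _⟩⟩, _⟩ := s
  · exact absurd rfl h
  · rfl

theorem mem_leafDecomps_replicate_iff {t t₀ : SchT} {k : ℕ} :
    (t₀, List.replicate k leafST) ∈ LeafDecomps t ↔ t₀ = t ∧ k + 1 = leavesT t.val := by
  change IsDecomp _ ((List.replicate k leafST).map Subtype.val ++ _) _ ↔ _
  rw [List.map_replicate]
  change IsDecomp _ (List.replicate k (PTree.node []) ++ [PTree.node []]) _ ↔ _
  rw [← List.replicate_succ', isDecomp_replicate_leaf_iff, Subtype.ext_iff]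

theorem ldash_eG (f : SchT → ℚ) : ldash f eG = f := by
  funext t
  rw [ldash_eq_sum]
  obtain ⟨n, hn⟩ : ∃ n, n + 1 = leavesT t.val :=
    ⟨_, Nat.succ_pred_eq_of_pos (leavesT_pos _)⟩
  rw [Finset.sum_eq_single_of_mem (t, List.replicate n leafST)]
  · simp [List.prod_replicate, eG_leafST]
  · exact (Set.Finite.mem_toFinset _).2 (mem_leafDecomps_replicate_iff.2 ⟨rfl, hn⟩)
  · rintro ⟨t₀, l⟩ hl hne
    by_cases hleaves : ∃ s ∈ l, s ≠ leafST
    · obtain ⟨s, hs, hsne⟩ := hleaves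
      exact mul_eq_zero_of_right _
        (List.prod_eq_zero (List.mem_map.2 ⟨s, hs, eG_of_ne_leafST hsne⟩))
    · have hl' : l = List.replicate l.length leafST :=
        List.eq_replicate_iff.2 ⟨rfl, fun s hs => not_not.1 fun h => hleaves ⟨s, hs, h⟩⟩
      rw [hl', Set.Finite.mem_toFinset, mem_leafDecomps_replicate_iff] at hl
      rw [hl', hl.1, Nat.succ_injective (hl.2.trans hn.symm)] at hne
      exact absurd rfl hne

theorem LeafDecomps.trans {t : SchT} {p q : SchT × List SchT} (hp : p ∈ LeafDecomps t)
    (hq : q ∈ LeafDecomps p.1) :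
    (q.1, (graftL (q.2.map Subtype.val) (p.2.map Subtype.val)).1.map toSchT) ∈ LeafDecomps t ∧
      (q.2, p.2) ∈
        ListDecomps ((graftL (q.2.map Subtype.val) (p.2.map Subtype.val)).1.map toSchT) := by
  have hred := map_val_map_toSchT (reduced_graftL (q.2.map Subtype.val) (p.2.map Subtype.val)
    (fun _ => reduced_of_mem_map_val) (fun _ => reduced_of_mem_map_val)).1
  change IsDecomp _ (List.map _ (List.map _ _) ++ _) _ ∧ IsDecompL _ _ (List.map _ (List.map _ _))
  rw [hred]
  exact IsDecomp.trans_concat_leaf hq hp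

theorem LeafDecomps.split {t : SchT} {r : SchT × List SchT} {c : List SchT × List SchT}
    (hr : r ∈ LeafDecomps t) (hc : c ∈ ListDecomps r.2) :
    (toSchT (graftT r.1.val (c.1.map Subtype.val ++ [.node []])).1, c.2) ∈ LeafDecomps t ∧
      (r.1, c.1) ∈ LeafDecomps (toSchT (graftT r.1.val (c.1.map Subtype.val ++ [.node []])).1) := by
  have hred : Reduced (graftT r.1.val (c.1.map Subtype.val ++ [.node []])).1 :=
    (reduced_graftT _ _ r.1.2 (List.forall_mem_append.2
      ⟨fun _ => reduced_of_mem_map_val, List.forall_mem_singleton.2 .leaf⟩)).1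
  change IsDecomp (toSchT _).val _ _ ∧ IsDecomp _ _ (toSchT _).val
  rw [toSchT_val hred]
  exact (IsDecomp.split hr (IsDecompL.append hc (isDecompL_leaf _))).symm

theorem ldash_ldash (f g h : SchT → ℚ) : ldash (ldash f g) h = ldash f (compG g h) := by
  funext t
  simp only [ldash_eq_sum, prod_map_compG, Finset.sum_mul, Finset.mul_sum]
  rw [Finset.sum_sigma', Finset.sum_sigma']
  refine Finset.sum_nbij'
    (fun x => ⟨(x.2.1, (graftL (x.2.2.map Subtype.val) (x.1.2.map Subtype.val)).1.map toSchT),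
      (x.2.2, x.1.2)⟩)
    (fun y => ⟨(toSchT (graftT y.1.1.val (y.2.1.map Subtype.val ++ [.node []])).1, y.2.2),
      (y.1.1, y.2.1)⟩) ?_ ?_ ?_ ?_ ?_
  · rintro ⟨p, q⟩ hx
    simp only [Finset.mem_sigma, Set.Finite.mem_toFinset] at hx ⊢
    exact LeafDecomps.trans hx.1 hx.2
  · rintro ⟨r, c⟩ hy
    simp only [Finset.mem_sigma, Set.Finite.mem_toFinset] at hy ⊢
    exact LeafDecomps.split hy.1 hy.2
  · rintro ⟨⟨t₁, ps⟩, ⟨t₀, qs⟩⟩ hx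
    simp only [Finset.mem_sigma, Set.Finite.mem_toFinset] at hx
    have ht₁ : toSchT (graftT t₀.val (qs.map Subtype.val ++ [.node []])).1 = t₁ := by
      rw [hx.2.2, toSchT_val_self]
    simp only [ht₁]
  · rintro ⟨⟨t₀, rs⟩, ⟨cs, l⟩⟩ hy
    simp only [Finset.mem_sigma, Set.Finite.mem_toFinset] at hy
    have hrs : (graftL (cs.map Subtype.val) (l.map Subtype.val)).1.map toSchT = rs := by
      rw [hy.2.2, map_toSchT_map_val]
    simp only [hrs]
  · intro x _
    exact mul_assoc ..

/-- if `f∘g = g∘f = e` in the group of the Schröder operad, then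
`f = (f⊣g)⊣f`; that is, the operadic R-transform `k = f⊣f^{∘−1}` of `f`
satisfies `f = k⊣f`. -/
theorem stmt10 (f g : SchT → ℚ) (hf : f leafST = 1) (hg : g leafST = 1)
    (h1 : compG f g = eG) (h2 : compG g f = eG) :
    f = ldash (ldash f g) f := by
  rw [ldash_ldash, h2, ldash_eG]
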